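/- arXiv:math/0311041 — 6 statements merged into one kernel-verified Lean document; each statement's English description precedes it below -/
import Mathlib

section
/- If X is a C-maximal set of vertices of a graph G, then every equivalence class of the relation 'same neighborhood inside X' on the complement of X is a homogeneous set (a clique or an independent set). -/
/-- For `u, v ∉ X`, `u ≡_X v` iff `u` and `v` have the same neighborhood inside `X`. -/
def SimpleGraph.EqOn {V : Type*} (G : SimpleGraph V) (X : Set V) (u v : V) : Prop :=
  ∀ x ∈ X, (G.Adj u x ↔ G.Adj v x)

/-- The `≡_X`-class of a vertex `u ∉ X`, as a subset of the complement of `X`. -/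
def SimpleGraph.classOf {V : Type*} (G : SimpleGraph V) (X : Set V) (u : V) : Set V :=
  {v | v ∉ X ∧ G.EqOn X u v}

/-- The partition `C(X)` of the complement of `X` into `≡_X`-classes. -/
def SimpleGraph.classes {V : Type*} (G : SimpleGraph V) (X : Set V) : Set (Set V) :=
  {S | ∃ u, u ∉ X ∧ S = G.classOf X u}

/-- `X` is `C`-maximal if adding a single vertex never increases the number of classes. -/
def SimpleGraph.CMaximal {V : Type*} (G : SimpleGraph V) (X : Set V) : Prop :=
  ∀ u ∉ X, (G.classes (X ∪ {u})).ncard ≤ (G.classes X).ncard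

namespace SimpleGraph

variable {V : Type*} (G : SimpleGraph V)

lemma eqOn_refl (X : Set V) (a : V) : G.EqOn X a a := fun _ _ => Iff.rfl

lemma eqOn_symm {X : Set V} {a b : V} (h : G.EqOn X a b) : G.EqOn X b a :=
  fun x hx => (h x hx).symm

lemma eqOn_trans {X : Set V} {a b c : V} (h1 : G.EqOn X a b) (h2 : G.EqOn X b c) :
    G.EqOn X a c := fun x hx => (h1 x hx).trans (h2 x hx)

lemma eqOn_mono {X X' : Set V} (hXX : X ⊆ X') {a b : V} (h : G.EqOn X' a b) :
    G.EqOn X a b := fun x hx => h x (hXX hx)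

lemma mem_classOf_self {X : Set V} {a : V} (ha : a ∉ X) : a ∈ G.classOf X a :=
  ⟨ha, G.eqOn_refl X a⟩

lemma classOf_eq {X : Set V} {a b : V} (h : G.EqOn X a b) :
    G.classOf X a = G.classOf X b := by
  ext v
  exact ⟨fun ⟨hv, he⟩ => ⟨hv, G.eqOn_trans (G.eqOn_symm h) he⟩,
    fun ⟨hv, he⟩ => ⟨hv, G.eqOn_trans h he⟩⟩

lemma iUnion_classOf {X X' : Set V} (hXX : X ⊆ X') {s : V} (hs : s ∉ X') :
    (⋃ v ∈ G.classOf X' s, G.classOf X v) = G.classOf X s := by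
  apply Set.Subset.antisymm
  · refine Set.iUnion₂_subset fun v hv => ?_
    rw [G.classOf_eq (G.eqOn_mono hXX (G.eqOn_symm hv.2))]
  · intro x hx
    exact Set.mem_biUnion (G.mem_classOf_self hs) hx

end SimpleGraph

/-- If `X` is `C`-maximal, then every class of `C(X)` is a clique or an independent set. -/
theorem classOf_homogeneous_of_cMaximal {V : Type*} [Fintype V] (G : SimpleGraph V)
    (X : Set V) (hX : G.CMaximal X) (u : V) (hu : u ∉ X) :
    ((G.classOf X u).Pairwise G.Adj) ∨
      ((G.classOf X u).Pairwise fun a b => ¬ G.Adj a b) := by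
  classical
  by_contra hcon
  push_neg at hcon
  obtain ⟨h1, h2⟩ := hcon
  rw [Set.Pairwise] at h1 h2
  push_neg at h1 h2
  obtain ⟨x, hx, y, hy, hxy, hnadj⟩ := h1
  obtain ⟨z, hz, w, hw, hzw, hadj⟩ := h2
  -- Find a, b, c in the class with `Adj a b`, `¬ Adj b c`, `b ≠ c`.
  obtain ⟨a, b, c, ha, hb, hc, hab, hbc, hbc'⟩ :
      ∃ a b c, a ∈ G.classOf X u ∧ b ∈ G.classOf X u ∧ c ∈ G.classOf X u ∧
        G.Adj a b ∧ ¬ G.Adj b c ∧ b ≠ c := by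
    by_cases h1' : G.Adj z x
    · by_cases h2' : G.Adj z y
      · exact ⟨z, x, y, hz, hx, hy, h1', hnadj, hxy⟩
      · have hzy : z ≠ y := by rintro rfl; exact hnadj h1'.symm
        exact ⟨x, z, y, hx, hz, hy, h1'.symm, h2', hzy⟩
    · by_cases hzx : z = x
      · subst hzx
        exact ⟨w, z, y, hw, hz, hy, hadj.symm, fun h => hnadj h, hxy⟩
      · exact ⟨w, z, x, hw, hz, hx, hadj.symm, h1', hzx⟩
  have hbX : b ∉ X := hb.1
  set X' : Set V := X ∪ {b} with hX'def
  have hXX' : X ⊆ X' := Set.subset_union_left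
  have hbX' : b ∈ X' := Set.mem_union_right _ rfl
  have haX' : a ∉ X' := by
    rintro (h | h)
    · exact ha.1 h
    · exact G.ne_of_adj hab (Set.mem_singleton_iff.mp h)
  have hcX' : c ∉ X' := by
    rintro (h | h)
    · exact hc.1 h
    · exact hbc' (Set.mem_singleton_iff.mp h).symm
  -- the "coarsening" map from classes of `X'` to classes of `X`
  set f : Set V → Set V := fun S => ⋃ v ∈ S, G.classOf X v with hfdef
  have hfval : ∀ s ∉ X', f (G.classOf X' s) = G.classOf X s := fun s hs =>
    G.iUnion_classOf hXX' hs
  set A : Set V := G.classOf X' a with hAdef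
  have hAmem : A ∈ G.classes X' := ⟨a, haX', rfl⟩
  have hC'mem : G.classOf X' c ∈ G.classes X' := ⟨c, hcX', rfl⟩
  have hAC' : G.classOf X' c ≠ A := by
    intro h
    have hcA : c ∈ A := h ▸ G.mem_classOf_self hcX'
    have := hcA.2 b hbX'
    exact hbc ((this.mp hab).symm)
  -- classes of X are covered by the image of classes of X' minus A
  have hcover : G.classes X ⊆ f '' (G.classes X' \ {A}) := by
    rintro D ⟨d, hdX, rfl⟩
    by_cases hdu : G.EqOn X d u
    · refine ⟨G.classOf X' c, ⟨hC'mem, hAC'⟩, ?_⟩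
      rw [hfval c hcX']
      exact (G.classOf_eq (G.eqOn_trans hdu hc.2)).symm
    · have hdb : d ≠ b := by
        rintro rfl
        exact hdu (G.eqOn_symm hb.2)
      have hdX' : d ∉ X' := by
        rintro (h | h)
        · exact hdX h
        · exact hdb (Set.mem_singleton_iff.mp h)
      refine ⟨G.classOf X' d, ⟨⟨d, hdX', rfl⟩, ?_⟩, hfval d hdX'⟩
      intro h
      have haD : a ∈ G.classOf X' d := h ▸ G.mem_classOf_self haX'
      exact hdu (G.eqOn_trans (G.eqOn_mono hXX' haD.2) (G.eqOn_symm ha.2))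
  have hfin : (G.classes X').Finite := Set.toFinite _
  have hfin2 : (G.classes X' \ {A}).Finite := hfin.diff
  have hchain : (G.classes X).ncard < (G.classes X').ncard := by
    calc (G.classes X).ncard ≤ (f '' (G.classes X' \ {A})).ncard :=
          Set.ncard_le_ncard hcover (hfin2.image f)
      _ ≤ (G.classes X' \ {A}).ncard := Set.ncard_image_le hfin2
      _ < (G.classes X').ncard := Set.ncard_diff_singleton_lt_of_mem hAmem hfin
  exact absurd (hX b hbX) (not_le.mpr hchain)
end

section
/- Every graph G of order n contains a C-maximal set X of vertices such that the number of classes |C(X)| ≥ |X| + 1; consequently |X| ≤ (n − 1)/2. -/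
lemma classes_card_aux {V : Type*} [Fintype V] [Nonempty V] (G : SimpleGraph V) (X : Set V) :
    (G.classes X).ncard + X.ncard ≤ Fintype.card V := by
  classical
  set f : Set V → V := fun S =>
    if h : ∃ u, u ∉ X ∧ S = G.classOf X u then h.choose else Classical.arbitrary V with hf
  have hspec : ∀ S ∈ G.classes X, f S ∉ X ∧ S = G.classOf X (f S) := by
    intro S hS
    have h : ∃ u, u ∉ X ∧ S = G.classOf X u := hS
    simpa [hf, dif_pos h] using h.choose_spec
  have h1 : (G.classes X).ncard ≤ Xᶜ.ncard := by
    apply Set.ncard_le_ncard_of_injOn f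
    · intro S hS; exact (hspec S hS).1
    · intro S hS T hT hST
      rw [(hspec S hS).2, (hspec T hT).2, hST]
  have h2 : X.ncard + Xᶜ.ncard = Fintype.card V := by
    simpa [Nat.card_eq_fintype_card] using Set.ncard_add_ncard_compl X
  omega

lemma exists_aux {V : Type*} [Fintype V] [Nonempty V] (G : SimpleGraph V) :
    ∀ k : ℕ, ∀ X : Set V, X.ncard + 1 ≤ (G.classes X).ncard →
      Fintype.card V ≤ X.ncard + k →
      ∃ Y : Set V, G.CMaximal Y ∧ Y.ncard + 1 ≤ (G.classes Y).ncard := by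
  intro k
  induction k with
  | zero =>
    intro X hP hcard
    have := classes_card_aux G X
    omega
  | succ k ih =>
    intro X hP hcard
    by_cases hmax : G.CMaximal X
    · exact ⟨X, hmax, hP⟩
    · simp only [SimpleGraph.CMaximal, not_forall, not_le] at hmax
      obtain ⟨u, hu, hlt⟩ := hmax
      have hins : (X ∪ {u}).ncard = X.ncard + 1 := by
        rw [Set.union_singleton, Set.ncard_insert_of_notMem hu (Set.toFinite _)]
      apply ih (X ∪ {u})
      · omega
      · omega

/-- Every (nonempty) graph of order `n` contains a `C`-maximal vertex set `X` with
`|C(X)| ≥ |X| + 1`; consequently `|X| ≤ (n - 1) / 2`, i.e. `2|X| + 1 ≤ n`. -/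
theorem exists_cMaximal {V : Type*} [Fintype V] [Nonempty V] (G : SimpleGraph V) :
    ∃ X : Set V, G.CMaximal X ∧ X.ncard + 1 ≤ (G.classes X).ncard ∧
      2 * X.ncard + 1 ≤ Fintype.card V := by
  have hP0 : (∅ : Set V).ncard + 1 ≤ (G.classes ∅).ncard := by
    have hne : (G.classes (∅ : Set V)).Nonempty := by
      obtain ⟨u⟩ := ‹Nonempty V›
      exact ⟨G.classOf ∅ u, u, Set.notMem_empty u, rfl⟩
    have := (Set.ncard_pos (Set.toFinite _)).mpr hne
    simp only [Set.ncard_empty, zero_add]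
    omega
  obtain ⟨Y, hmax, hY⟩ := exists_aux G (Fintype.card V) ∅ hP0 (by simp)
  refine ⟨Y, hmax, hY, ?_⟩
  have := classes_card_aux G Y
  omega
end

section
/- If v is a non-isolated vertex of a graph G, then the size of its similarity class satisfies σ_G(v) ≤ Δ(G) + 1, where Δ(G) is the maximum degree of G. -/
/-- Vertices `u` and `v` of a graph are *similar* if the transposition `(u v)`
is an automorphism of the graph. -/
def SimpleGraph.IsSim {V : Type*} [DecidableEq V] (G : SimpleGraph V) (u v : V) : Prop :=
  ∀ x y : V, G.Adj x y ↔ G.Adj (Equiv.swap u v x) (Equiv.swap u v y)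

/-- If `v` is a non-isolated vertex, then the size of its similarity class satisfies
`σ_G(v) ≤ Δ(G) + 1`. -/
theorem simClass_card_le_maxDegree_succ {V : Type*} [Fintype V] [DecidableEq V]
    (G : SimpleGraph V) [DecidableRel G.Adj] (v : V) (hv : ∃ u, G.Adj v u) :
    ({w | G.IsSim v w}).ncard ≤ G.maxDegree + 1 := by
  classical
  obtain ⟨u, hu⟩ := hv
  have hncard_nbr : ∀ x : V, (G.neighborSet x).ncard = G.degree x := by
    intro x
    rw [← Nat.card_coe_set_eq, Nat.card_eq_fintype_card]
    exact G.card_neighborSet_eq_degree x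
  by_cases hcase : ∃ w, G.IsSim v w ∧ G.Adj v w
  · obtain ⟨w0, hw0, hadj0⟩ := hcase
    have hw0v : w0 ≠ v := fun h => G.ne_of_adj hadj0 h.symm
    have hsub : {w | G.IsSim v w} ⊆ insert v (G.neighborSet v) := by
      intro w hw
      by_cases hwv : w = v
      · simp [hwv]
      · right
        show G.Adj v w
        by_cases hww0 : w = w0
        · exact hww0 ▸ hadj0
        · have h1 : G.Adj w w0 := by
            have h := (hw v w0).mp hadj0
            rwa [Equiv.swap_apply_left,
              Equiv.swap_apply_of_ne_of_ne hw0v (Ne.symm hww0)] at h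
          have h2 := (hw0 w w0).mp h1
          rw [Equiv.swap_apply_of_ne_of_ne hwv hww0, Equiv.swap_apply_right] at h2
          exact h2.symm
    calc ({w | G.IsSim v w}).ncard
        ≤ (insert v (G.neighborSet v)).ncard :=
          Set.ncard_le_ncard hsub (Set.toFinite _)
      _ ≤ (G.neighborSet v).ncard + 1 := Set.ncard_insert_le _ _
      _ = G.degree v + 1 := by rw [hncard_nbr]
      _ ≤ G.maxDegree + 1 := by
          have := G.degree_le_maxDegree v
          omega
  · push_neg at hcase
    have hsub : {w | G.IsSim v w} ⊆ G.neighborSet u := by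
      intro w hw
      by_cases hwv : w = v
      · subst hwv; exact hu.symm
      · have huv : u ≠ v := fun h => G.ne_of_adj hu h.symm
        have huw : u ≠ w := by
          intro h
          exact hcase u (h ▸ hw) hu
        have h := (hw v u).mp hu
        rw [Equiv.swap_apply_left,
          Equiv.swap_apply_of_ne_of_ne huv huw] at h
        exact h.symm
    calc ({w | G.IsSim v w}).ncard
        ≤ (G.neighborSet u).ncard := Set.ncard_le_ncard hsub (Set.toFinite _)
      _ = G.degree u := hncard_nbr u
      _ ≤ G.maxDegree + 1 := (G.degree_le_maxDegree u).trans (Nat.le_succ _)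
end

section
/- For a graph H of order n, the minimum separator size satisfies s(H) ≥ (i_v(H)/(3 + i_v(H))) · n, where i_v(H) is the vertex-expansion of H. -/
/-- The external neighborhood `N(A)` of a vertex set `A`. -/
def SimpleGraph.extNbhd {V : Type*} (G : SimpleGraph V) (A : Set V) : Set V :=
  {v | v ∉ A ∧ ∃ a ∈ A, G.Adj v a}

/-- `X` is a separator of `G` if every connected component of `G` with `X` removed
has at most `n/2` vertices. -/
def SimpleGraph.IsSeparator {V : Type*} [Fintype V] (G : SimpleGraph V) (X : Set V) : Prop :=
  ∀ c : (G.induce (Xᶜ : Set V)).ConnectedComponent, 2 * c.supp.ncard ≤ Fintype.card V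

/-- Numeric selection lemma: given numbers `c i ≤ n/2` with total `m ≤ n`, there is a
sub-collection whose sum lies in `[m/3, n/2]`. -/
lemma exists_subset_third {ι : Type*} [DecidableEq ι] (s : Finset ι) (c : ι → ℕ) (n : ℕ)
    (h : ∀ i ∈ s, 2 * c i ≤ n) (hm : ∑ i ∈ s, c i ≤ n) :
    ∃ S ⊆ s, (∑ i ∈ s, c i) ≤ 3 * ∑ i ∈ S, c i ∧ 2 * ∑ i ∈ S, c i ≤ n := by
  set m := ∑ i ∈ s, c i with hmdef
  obtain ⟨S, hSmem, hmin⟩ := Finset.exists_min_image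
    ((s.powerset).filter (fun S => m ≤ 3 * ∑ i ∈ S, c i)) (fun S => ∑ i ∈ S, c i)
    ⟨s, by simp [Finset.mem_filter, Finset.mem_powerset]; omega⟩
  simp only [Finset.mem_filter, Finset.mem_powerset] at hSmem
  obtain ⟨hSs, hS3⟩ := hSmem
  by_cases hc : 2 * ∑ i ∈ S, c i ≤ n
  · exact ⟨S, hSs, hS3, hc⟩
  push_neg at hc
  have hSm : ∑ i ∈ S, c i ≤ m := Finset.sum_le_sum_of_subset hSs
  have hpos : 0 < ∑ i ∈ S, c i := by omega
  have hex : ∃ i ∈ S, c i ≠ 0 := by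
    by_contra h'
    push_neg at h'
    have : ∑ i ∈ S, c i = 0 := Finset.sum_eq_zero (fun i hi => h' i hi)
    omega
  obtain ⟨i, hiS, hci⟩ := hex
  have hi3 : 3 * c i < m := by
    by_contra h'
    push_neg at h'
    have h1 : ({i} : Finset ι) ∈ (s.powerset).filter (fun S => m ≤ 3 * ∑ i ∈ S, c i) := by
      simp [Finset.mem_filter, Finset.mem_powerset, Finset.singleton_subset_iff]
      exact ⟨hSs hiS, h'⟩
    have := hmin _ h1
    simp only [Finset.sum_singleton] at this
    have := h i (hSs hiS)
    omega
  have hsplit : ∑ j ∈ S.erase i, c j + c i = ∑ j ∈ S, c j := Finset.sum_erase_add S c hiS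
  have herase : 3 * ∑ j ∈ S.erase i, c j < m := by
    by_contra h'
    push_neg at h'
    have h1 : S.erase i ∈ (s.powerset).filter (fun S => m ≤ 3 * ∑ i ∈ S, c i) := by
      simp only [Finset.mem_filter, Finset.mem_powerset]
      exact ⟨(Finset.erase_subset i S).trans hSs, h'⟩
    have := hmin _ h1
    omega
  have hsdiff : ∑ j ∈ s \ S, c j + ∑ j ∈ S, c j = m := Finset.sum_sdiff hSs
  exact ⟨s \ S, Finset.sdiff_subset, by omega, by omega⟩

/-- If `iv` is (a lower bound on) the vertex-expansion of `H`, i.e.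
`|N(A)| ≥ iv·|A|` for every set `A` with `1 ≤ |A| ≤ n/2`, then every separator has size
at least `(iv/(3+iv))·n`; in particular `s(H) ≥ (i_v(H)/(3+i_v(H)))·n`. -/
theorem separator_card_ge_of_vertexExpansion {V : Type*} [Fintype V] (G : SimpleGraph V)
    (iv : ℝ) (hiv0 : 0 ≤ iv)
    (hiv : ∀ A : Set V, A.Nonempty → 2 * A.ncard ≤ Fintype.card V →
      iv * A.ncard ≤ (G.extNbhd A).ncard)
    (X : Set V) (hX : G.IsSeparator X) :
    iv / (3 + iv) * Fintype.card V ≤ X.ncard := by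
  classical
  set n := Fintype.card V with hn
  set G' := G.induce (Xᶜ : Set V) with hG'
  haveI : Fintype (Xᶜ : Set V) := Fintype.ofFinite _
  haveI : Fintype G'.ConnectedComponent := Fintype.ofFinite _
  -- sum of component sizes is the size of Xᶜ
  have hsum : ∑ k : G'.ConnectedComponent, k.supp.ncard = (Xᶜ : Set V).ncard := by
    have h1 : (Xᶜ : Set V).ncard = (Finset.univ : Finset (Xᶜ : Set V)).card := by
      rw [Set.ncard_eq_toFinset_card', Set.toFinset_card, ← Finset.card_univ]
    rw [h1, Finset.card_eq_sum_card_fiberwise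
      (f := fun v => G'.connectedComponentMk v) (t := Finset.univ) (fun x _ => Finset.mem_univ _)]
    apply Finset.sum_congr rfl
    intro k _
    rw [Set.ncard_eq_toFinset_card']
    congr 1
    ext v
    simp [SimpleGraph.ConnectedComponent.supp]
    exact (Set.mem_toFinset (s := k.supp)).trans Iff.rfl
  have hmn : (Xᶜ : Set V).ncard ≤ n := by
    have := Set.ncard_le_ncard (Set.subset_univ (Xᶜ : Set V)) (Set.toFinite _)
    simpa [Set.ncard_univ] using this
  obtain ⟨S, hSsub, hS3, hS2⟩ := exists_subset_third Finset.univ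
    (fun k : G'.ConnectedComponent => k.supp.ncard) n
    (fun k _ => hX k) (by rw [hsum]; exact hmn)
  -- the vertex set A
  set FA : Finset (Xᶜ : Set V) := S.biUnion (fun k => k.supp.toFinset) with hFA
  have hFAcard : FA.card = ∑ k ∈ S, k.supp.ncard := by
    rw [hFA, Finset.card_biUnion]
    · apply Finset.sum_congr rfl
      intro k _
      rw [Set.ncard_eq_toFinset_card']
    · intro k1 _ k2 _ hne
      simp only [Finset.disjoint_left, Set.mem_toFinset]
      intro v h1 h2
      exact hne (h1.symm.trans h2)
  set A : Set V := ↑(FA.image (Subtype.val : (Xᶜ : Set V) → V)) with hA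
  have hAcard : A.ncard = ∑ k ∈ S, k.supp.ncard := by
    rw [hA, Set.ncard_coe_finset, Finset.card_image_of_injective _ Subtype.val_injective,
      hFAcard]
  -- membership description
  have hmemA : ∀ v : V, v ∈ A ↔ ∃ (hv : v ∈ (Xᶜ : Set V)), G'.connectedComponentMk ⟨v, hv⟩ ∈ S := by
    intro v
    simp only [hA, Finset.coe_image, Set.mem_image, Finset.mem_coe, hFA, Finset.mem_biUnion,
      Set.mem_toFinset]
    constructor
    · rintro ⟨⟨w, hw⟩, ⟨k, hkS, hsupp⟩, rfl⟩
      exact ⟨hw, by rwa [show G'.connectedComponentMk ⟨w, hw⟩ = k from hsupp]⟩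
    · rintro ⟨hv, hS⟩
      exact ⟨⟨v, hv⟩, ⟨_, hS, rfl⟩, rfl⟩
  -- external neighborhood is inside X
  have hext : G.extNbhd A ⊆ X := by
    rintro v ⟨hvA, a, haA, hadj⟩
    by_contra hvX
    have hv : v ∈ (Xᶜ : Set V) := hvX
    obtain ⟨ha, hkS⟩ := (hmemA a).1 haA
    have hadj' : G'.Adj ⟨v, hv⟩ ⟨a, ha⟩ := hadj
    have : G'.connectedComponentMk ⟨v, hv⟩ = G'.connectedComponentMk ⟨a, ha⟩ :=
      SimpleGraph.ConnectedComponent.sound hadj'.reachable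
    exact hvA ((hmemA v).2 ⟨hv, this ▸ hkS⟩)
  have hextle : (G.extNbhd A).ncard ≤ X.ncard := Set.ncard_le_ncard hext (Set.toFinite _)
  -- key cardinality facts
  have hcompl : X.ncard + (Xᶜ : Set V).ncard = n := by
    rw [Set.ncard_add_ncard_compl X, Nat.card_eq_fintype_card]
  by_cases hzero : ∑ k ∈ S, k.supp.ncard = 0
  · -- then Xᶜ is empty, X.ncard = n
    have hm0 : (Xᶜ : Set V).ncard = 0 := by omega
    have hxn : X.ncard = n := by omega
    rw [hxn]
    have h1 : iv / (3 + iv) ≤ 1 := by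
      rw [div_le_one (by linarith)]
      linarith
    nlinarith [Nat.cast_nonneg (α := ℝ) n]
  · have hApos : 0 < A.ncard := by omega
    have hAne : A.Nonempty := Set.nonempty_of_ncard_ne_zero (by omega)
    have h2A : 2 * A.ncard ≤ n := by omega
    have hivA : iv * A.ncard ≤ (G.extNbhd A).ncard := hiv A hAne h2A
    -- real arithmetic
    have h1 : iv * (A.ncard : ℝ) ≤ (X.ncard : ℝ) := by
      refine hivA.trans ?_
      exact_mod_cast hextle
    have h2 : (n : ℝ) - (X.ncard : ℝ) ≤ 3 * (A.ncard : ℝ) := by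
      have : (Xᶜ : Set V).ncard ≤ 3 * A.ncard := by omega
      have h3 : ((Xᶜ : Set V).ncard : ℝ) ≤ 3 * (A.ncard : ℝ) := by exact_mod_cast this
      have h4 : (X.ncard : ℝ) + ((Xᶜ : Set V).ncard : ℝ) = n := by exact_mod_cast hcompl
      linarith
    rw [div_mul_eq_mul_div, div_le_iff₀ (by linarith : (0:ℝ) < 3 + iv)]
    nlinarith [mul_le_mul_of_nonneg_left h2 hiv0, Nat.cast_nonneg (α := ℝ) X.ncard,
      Nat.cast_nonneg (α := ℝ) A.ncard]
end

section
/- In a k-uniform hypergraph, if v₁ ∼ w₁, …, v_k ∼ w_k are pairwise similar vertices (v_i similar to w_i for each i), with v₁,…,v_k pairwise distinct and w₁,…,w_k pairwise distinct, then {v₁,…,v_k} is an edge if and only if {w₁,…,w_k} is an edge. -/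
/-- Vertices `u` and `v` of a hypergraph with edge predicate `E` are *similar* if the
transposition `(u v)` maps the edge set to itself. -/
def Hypergraph.IsSim {V : Type*} [DecidableEq V] (E : Finset V → Prop) (u v : V) : Prop :=
  ∀ A : Finset V, E A ↔ E (A.image (Equiv.swap u v))

lemma sim_refl {V : Type*} [DecidableEq V] (E : Finset V → Prop) (u : V) :
    Hypergraph.IsSim E u u := by
  intro A
  rw [Equiv.swap_self]
  simp

lemma sim_trans {V : Type*} [DecidableEq V] {E : Finset V → Prop} {a b c : V}
    (hab : Hypergraph.IsSim E a b) (hbc : Hypergraph.IsSim E b c) :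
    Hypergraph.IsSim E a c := by
  rcases eq_or_ne a b with rfl | hba
  · exact hbc
  rcases eq_or_ne c b with rfl | hcb
  · exact hab
  rcases eq_or_ne c a with rfl | hca
  · exact sim_refl E _
  intro A
  have hperm : Equiv.swap a b * Equiv.swap b c * Equiv.swap a b = Equiv.swap a c := by
    have := Equiv.swap_mul_swap_mul_swap hcb hca
    rwa [Equiv.swap_comm b a, Equiv.swap_comm c b] at this
  have h : ∀ x, Equiv.swap a b (Equiv.swap b c (Equiv.swap a b x)) = Equiv.swap a c x := by
    intro x
    simp [← hperm, Equiv.Perm.mul_apply]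
  calc E A ↔ E (A.image (Equiv.swap a b)) := hab A
    _ ↔ E ((A.image (Equiv.swap a b)).image (Equiv.swap b c)) := hbc _
    _ ↔ E (((A.image (Equiv.swap a b)).image (Equiv.swap b c)).image (Equiv.swap a b)) := hab _
    _ ↔ E (A.image (Equiv.swap a c)) := by
        rw [Finset.image_image, Finset.image_image]
        constructor <;> intro hE <;> [skip; skip] <;>
          { convert hE using 2
            ext x
            simp [h x] }

lemma aux_key {V : Type*} [DecidableEq V] {k : ℕ} (E : Finset V → Prop) :
    ∀ d : ℕ, ∀ v w : Fin k → V, Function.Injective v → Function.Injective w →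
      (∀ i, Hypergraph.IsSim E (v i) (w i)) →
      (Finset.univ.filter (fun i => v i ≠ w i)).card ≤ d →
      (E (Finset.univ.image v) ↔ E (Finset.univ.image w)) := by
  intro d
  induction d with
  | zero =>
    intro v w hv hw hsim hcard
    have : v = w := by
      funext i
      by_contra h
      have : i ∈ Finset.univ.filter (fun i => v i ≠ w i) := by simp [h]
      have := Finset.card_pos.mpr ⟨i, this⟩
      omega
    rw [this]
  | succ d ih =>
    intro v w hv hw hsim hcard
    by_cases hle : (Finset.univ.filter (fun i => v i ≠ w i)).card ≤ d
    · exact ih v w hv hw hsim hle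
    have hne : (Finset.univ.filter (fun i => v i ≠ w i)).Nonempty := by
      rw [← Finset.card_pos]; omega
    obtain ⟨i, hi⟩ := hne
    have hvi : v i ≠ w i := by simpa using hi
    by_cases hex : ∃ j, v j = w i
    · -- Case B: w i is among the v's; permute v internally
      obtain ⟨j, hj⟩ := hex
      have hij : j ≠ i := fun h => hvi (h ▸ hj)
      set v' : Fin k → V := v ∘ (Equiv.swap i j) with hv'def
      have hv' : Function.Injective v' := hv.comp (Equiv.swap i j).injective
      have hsim' : ∀ t, Hypergraph.IsSim E (v' t) (w t) := by
        intro t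
        rcases eq_or_ne t i with rfl | hti
        · have : v' t = w t := by simp [hv'def, hj]
          rw [this]; exact sim_refl E _
        rcases eq_or_ne t j with rfl | htj
        · have : v' t = v i := by simp [hv'def]
          rw [this]
          -- v i ∼ w i = v j ∼ w t
          exact sim_trans (hsim i) (hj ▸ hsim t)
        · have : v' t = v t := by
            simp [hv'def, Equiv.swap_apply_of_ne_of_ne hti htj]
          rw [this]; exact hsim t
      have himg : Finset.univ.image v' = Finset.univ.image v := by
        rw [hv'def, ← Finset.image_image]
        congr 1
        exact Finset.image_univ_equiv (Equiv.swap i j)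
      have hsub : (Finset.univ.filter (fun t => v' t ≠ w t)) ⊆
          (Finset.univ.filter (fun t => v t ≠ w t)).erase i := by
        intro t ht
        simp only [Finset.mem_filter, Finset.mem_univ, true_and] at ht
        rw [Finset.mem_erase]
        constructor
        · rintro rfl
          exact ht (by simp [hv'def, hj])
        · simp only [Finset.mem_filter, Finset.mem_univ, true_and]
          intro hvt
          rcases eq_or_ne t i with rfl | hti
          · exact ht (by simp [hv'def, hj])
          rcases eq_or_ne t j with rfl | htj
          · -- v j = w j and v j = w i gives w i = w j, so i = j, contradiction
            exact hij (hw (hj.symm.trans hvt)).symm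
          · exact ht (by simpa [hv'def, Equiv.swap_apply_of_ne_of_ne hti htj] using hvt)
      have hcard' : (Finset.univ.filter (fun t => v' t ≠ w t)).card ≤ d := by
        have h1 := Finset.card_le_card hsub
        have h2 := Finset.card_erase_of_mem hi
        omega
      rw [← himg]
      exact ih v' w hv' hw hsim' hcard'
    · -- Case A: w i is not among the v's; replace v i by w i
      push_neg at hex
      set v' : Fin k → V := fun t => if t = i then w i else v t with hv'def
      have hv' : Function.Injective v' := by
        intro s t hst
        simp only [hv'def] at hst
        split_ifs at hst with hs ht ht
        · rw [hs, ht]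
        · exact absurd hst.symm (hex t)
        · exact absurd hst (hex s)
        · exact hv hst
      have hsim' : ∀ t, Hypergraph.IsSim E (v' t) (w t) := by
        intro t
        rcases eq_or_ne t i with rfl | hti
        · have : v' t = w t := by simp [hv'def]
          rw [this]; exact sim_refl E _
        · have : v' t = v t := by simp [hv'def, hti]
          rw [this]; exact hsim t
      have hsub : (Finset.univ.filter (fun t => v' t ≠ w t)) ⊆
          (Finset.univ.filter (fun t => v t ≠ w t)).erase i := by
        intro t ht
        simp only [Finset.mem_filter, Finset.mem_univ, true_and] at ht
        rw [Finset.mem_erase]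
        constructor
        · rintro rfl
          exact ht (by simp [hv'def])
        · simp only [Finset.mem_filter, Finset.mem_univ, true_and]
          intro hvt
          rcases eq_or_ne t i with rfl | hti
          · exact ht (by simp [hv'def])
          · exact ht (by simpa [hv'def, hti] using hvt)
      have hcard' : (Finset.univ.filter (fun t => v' t ≠ w t)).card ≤ d := by
        have h1 := Finset.card_le_card hsub
        have h2 := Finset.card_erase_of_mem hi
        omega
      have hstep : E (Finset.univ.image v) ↔ E (Finset.univ.image v') := by
        have himg : (Finset.univ.image v).image (Equiv.swap (v i) (w i)) =
            Finset.univ.image v' := by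
          rw [Finset.image_image]
          congr 1
          funext t
          rcases eq_or_ne t i with rfl | hti
          · simp [hv'def]
          · have h1 : v t ≠ v i := fun h => hti (hv h)
            have h2 : v t ≠ w i := hex t
            simp [Function.comp, Equiv.swap_apply_of_ne_of_ne h1 h2, hv'def, hti]
        rw [← himg]
        exact hsim i _
      rw [hstep]
      exact ih v' w hv' hw hsim' hcard'

/-- In a `k`-uniform hypergraph, if `v i ∼ w i` for each `i`, with `v₁, …, v_k`
pairwise distinct and `w₁, …, w_k` pairwise distinct, then `{v₁, …, v_k}` is an edge
iff `{w₁, …, w_k}` is an edge. -/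
theorem hypergraph_edge_iff_of_pointwise_sim {V : Type*} [DecidableEq V] (k : ℕ)
    (E : Finset V → Prop) (hunif : ∀ A, E A → A.card = k)
    (v w : Fin k → V) (hv : Function.Injective v) (hw : Function.Injective w)
    (hsim : ∀ i, Hypergraph.IsSim E (v i) (w i)) :
    E (Finset.univ.image v) ↔ E (Finset.univ.image w) := by
  exact aux_key E (Finset.univ.filter (fun i => v i ≠ w i)).card v w hv hw hsim le_rfl
end

section
/- Let G and G' be graphs with G' = G ⊕ lv for some l ≥ 1 and vertex v with σ_G(v) = s ≥ 2. Then Duplicator wins the Ehrenfeucht–Fraïssé game on G and G' with s pebbles for any number of rounds; equivalently, any first-order formula distinguishing G from G' requires at least s + 1 variables. -/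
/-- A pebble configuration (`f i = some (u, u')` meaning the two copies of pebble `i`
are on `u ∈ V(G)` and `u' ∈ V(G')`) is a partial isomorphism. -/
def EhrPartialIso {V V' : Type*} (G : SimpleGraph V) (G' : SimpleGraph V') {s : ℕ}
    (f : Fin s → Option (V × V')) : Prop :=
  ∀ i j : Fin s, ∀ p ∈ f i, ∀ q ∈ f j,
    (p.1 = q.1 ↔ p.2 = q.2) ∧ (G.Adj p.1 q.1 ↔ G'.Adj p.2 q.2)

/-- Duplicator has a winning strategy in the `r`-round `s`-pebble Ehrenfeucht game on
`G` and `G'` starting from configuration `f`: the configuration is a partial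
isomorphism and, whatever pebble and vertex (in either graph) Spoiler chooses,
Duplicator can answer in the other graph and keep winning. -/
def DuplicatorWins {V V' : Type*} (G : SimpleGraph V) (G' : SimpleGraph V') (s : ℕ) :
    ℕ → (Fin s → Option (V × V')) → Prop
  | 0, f => EhrPartialIso G G' f
  | r + 1, f => EhrPartialIso G G' f ∧ ∀ i : Fin s,
      (∀ u : V, ∃ u' : V', DuplicatorWins G G' s r (Function.update f i (some (u, u')))) ∧
      (∀ u' : V', ∃ u : V, DuplicatorWins G G' s r (Function.update f i (some (u, u'))))

namespace SimpleGraph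

variable {V : Type*} [DecidableEq V] {G : SimpleGraph V}

lemma isSim_refl (G : SimpleGraph V) (u : V) : G.IsSim u u := by
  intro x y; simp [Equiv.swap_self]

lemma isSim_symm {u w : V} (h : G.IsSim u w) : G.IsSim w u := by
  intro x y; rw [Equiv.swap_comm]; exact h x y

lemma isSim_adj {u w : V} (h : G.IsSim u w) {z : V} (hz1 : z ≠ u) (hz2 : z ≠ w) :
    G.Adj u z ↔ G.Adj w z := by
  have := h u z
  rwa [Equiv.swap_apply_left, Equiv.swap_apply_of_ne_of_ne hz1 hz2] at this

lemma isSim_trans {v u w : V} (h1 : G.IsSim v u) (h2 : G.IsSim v w) : G.IsSim u w := by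
  rcases eq_or_ne u w with rfl | huw
  · exact isSim_refl G u
  rcases eq_or_ne u v with rfl | huv
  · exact h2
  rcases eq_or_ne w v with rfl | hwv
  · exact isSim_symm h1
  have key : Equiv.swap u w = Equiv.swap v u * Equiv.swap v w * (Equiv.swap v u)⁻¹ := by
    have h := Equiv.swap_apply_apply (Equiv.swap v u) v w
    rwa [Equiv.swap_apply_left, Equiv.swap_apply_of_ne_of_ne hwv huw.symm] at h
  intro x y
  rw [key]
  simp only [Equiv.swap_inv, Equiv.Perm.mul_apply]
  rw [← h1 (Equiv.swap v w (Equiv.swap v u x)) (Equiv.swap v w (Equiv.swap v u y)),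
      ← h2 (Equiv.swap v u x) (Equiv.swap v u y), ← h1 x y]

lemma adj_const {z a b c d : V} (ha : G.IsSim z a) (hb : G.IsSim z b)
    (hc : G.IsSim z c) (hd : G.IsSim z d) (hab : a ≠ b) (hcd : c ≠ d) :
    G.Adj a b ↔ G.Adj c d := by
  rcases eq_or_ne c a with rfl | hca
  · rcases eq_or_ne d b with rfl | hdb
    · rfl
    · rw [G.adj_comm c b, G.adj_comm c d]
      exact isSim_adj (isSim_trans hb hd) hab hcd
  rcases eq_or_ne c b with rfl | hcb
  · rcases eq_or_ne d a with rfl | hda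
    · exact G.adj_comm d c
    · rw [G.adj_comm c d]
      exact isSim_adj (isSim_trans ha hd) hab.symm hcd
  · have h1 : G.Adj a b ↔ G.Adj c b :=
      isSim_adj (isSim_trans ha hc) hab.symm (Ne.symm hcb)
    rcases eq_or_ne d b with rfl | hdb
    · exact h1
    · have h2 : G.Adj b c ↔ G.Adj d c := isSim_adj (isSim_trans hb hd) hcb hcd
      rw [h1, G.adj_comm c b, h2, G.adj_comm d c]

end SimpleGraph

/-- In a set of cardinality at least `s`, there is an element avoiding the (at most
`s - 1`) values `g q` for pebbles `q` placed at positions other than `i`. -/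
lemma exists_fresh {α β : Type*} [DecidableEq α] {s : ℕ} (S : Set α) (hfin : S.Finite)
    (hS : s ≤ S.ncard) (f : Fin s → Option β) (g : β → α) (i : Fin s) :
    ∃ a ∈ S, ∀ k, k ≠ i → ∀ q ∈ f k, a ≠ g q := by
  classical
  set occ : Finset α := (Finset.univ.erase i).biUnion
      (fun k => ((f k).map g).toFinset) with hoccdef
  have hoccle : occ.card ≤ s - 1 := by
    have h := Finset.card_biUnion_le_card_mul (Finset.univ.erase i)
        (fun k => ((f k).map g).toFinset) 1 ?_
    · have hce : (Finset.univ.erase i).card = s - 1 := by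
        rw [Finset.card_erase_of_mem (Finset.mem_univ i)]
        simp
      rw [hce, mul_one] at h
      exact h
    · intro k _
      rcases h : Option.map g (f k) with _ | x <;> simp [h]
  have hfc : hfin.toFinset.card = S.ncard := (Set.ncard_eq_toFinset_card _ hfin).symm
  have hs1 : 1 ≤ s := by
    rcases Nat.eq_zero_or_pos s with rfl | h
    · exact absurd i.2 (by omega)
    · exact h
  have hnotsub : ¬ hfin.toFinset ⊆ occ := by
    intro hsub
    have := Finset.card_le_card hsub
    omega
  obtain ⟨a, ha1, ha2⟩ := Finset.not_subset.mp hnotsub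
  refine ⟨a, (Set.Finite.mem_toFinset hfin).mp ha1, ?_⟩
  intro k hk q hq heq
  apply ha2
  rw [hoccdef]
  apply Finset.mem_biUnion.mpr
  refine ⟨k, Finset.mem_erase.mpr ⟨hk, Finset.mem_univ k⟩, ?_⟩
  rw [Option.mem_def.mp hq]
  simp [heq]

/-- Let `G' = G ⊕ l·v` where `σ_G(v) = s ≥ 2` and `l ≥ 1` (formalized by: `G'` has
`|G| + l` vertices, contains an induced copy `φ` of `G`, and the similarity class of
`φ v` in `G'` is exactly the image of the class of `v` together with all new
vertices).  Then Duplicator wins the `s`-pebble Ehrenfeucht game on `G` and `G'` for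
any number of rounds; equivalently, distinguishing `G` from `G'` needs `s + 1`
variables. -/
theorem duplicator_wins_oplus {V V' : Type*} [Fintype V] [Fintype V']
    [DecidableEq V] [DecidableEq V'] (G : SimpleGraph V) (G' : SimpleGraph V')
    (v : V) (s l : ℕ) (hs : ({w | G.IsSim v w}).ncard = s) (hs2 : 2 ≤ s) (hl : 1 ≤ l)
    (hcard : Fintype.card V' = Fintype.card V + l) (φ : V ↪ V')
    (hφ : ∀ a b : V, G'.Adj (φ a) (φ b) ↔ G.Adj a b)
    (hclass : {w : V' | G'.IsSim (φ v) w} = (φ '' {w | G.IsSim v w}) ∪ (Set.range φ)ᶜ) :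
    ∀ r : ℕ, DuplicatorWins G G' s r (fun _ => none) := by
  classical
  set C : Set V := {w | G.IsSim v w} with hCdef
  set C' : Set V' := {w | G'.IsSim (φ v) w} with hC'def
  have memC : ∀ a : V, a ∈ C ↔ G.IsSim v a := fun a => Iff.rfl
  have memC' : ∀ a : V', a ∈ C' ↔ G'.IsSim (φ v) a := fun a => Iff.rfl
  have hvC : v ∈ C := (memC v).mpr (G.isSim_refl v)
  have hφvC' : φ v ∈ C' := (memC' (φ v)).mpr (G'.isSim_refl (φ v))
  have hφmem : ∀ a : V, φ a ∈ C' ↔ a ∈ C := by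
    intro a
    rw [hclass]
    constructor
    · rintro (⟨w, hw, hwe⟩ | hr)
      · rwa [← φ.injective hwe]
      · exact absurd ⟨a, rfl⟩ hr
    · intro h; exact Or.inl ⟨a, h, rfl⟩
  have hout : ∀ w' : V', w' ∉ Set.range φ → w' ∈ C' := by
    intro w' h; rw [hclass]; exact Or.inr h
  -- a second element of the class of `v`
  obtain ⟨w0, hw0C, hw0v⟩ : ∃ w0 ∈ C, w0 ≠ v := by
    have h1 : 1 < C.ncard := by omega
    obtain ⟨a, ha, b, hb, hab⟩ := (Set.one_lt_ncard (Set.toFinite C)).mp h1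
    rcases eq_or_ne a v with rfl | hav
    · exact ⟨b, hb, hab.symm⟩
    · exact ⟨a, ha, hav⟩
  have hφw0 : φ w0 ∈ C' := (hφmem w0).mpr hw0C
  have hφvw0 : φ v ≠ φ w0 := fun h => hw0v (φ.injective h).symm
  -- adjacency is constant between the class and a fixed outside vertex
  have hcross : ∀ a w : V, a ∈ C → w ∉ C → (G.Adj a w ↔ G.Adj v w) := by
    intro a w ha hw
    rcases eq_or_ne a v with rfl | hav
    · rfl
    · refine (SimpleGraph.isSim_adj ((memC a).mp ha) ?_ ?_).symm
      · rintro rfl; exact hw hvC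
      · rintro rfl; exact hw ha
  have hcross' : ∀ a w : V', a ∈ C' → w ∉ C' → (G'.Adj a w ↔ G'.Adj (φ v) w) := by
    intro a w ha hw
    rcases eq_or_ne a (φ v) with rfl | hav
    · rfl
    · refine (SimpleGraph.isSim_adj ((memC' a).mp ha) ?_ ?_).symm
      · rintro rfl; exact hw hφvC'
      · rintro rfl; exact hw ha
  -- adjacency is constant within the classes
  have hbase : ∀ a b : V, a ∈ C → b ∈ C → a ≠ b → (G.Adj a b ↔ G.Adj v w0) :=
    fun a b ha hb hab =>
      SimpleGraph.adj_const ((memC a).mp ha) ((memC b).mp hb) ((memC v).mp hvC)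
        ((memC w0).mp hw0C) hab (Ne.symm hw0v)
  have hbase' : ∀ a b : V', a ∈ C' → b ∈ C' → a ≠ b →
      (G'.Adj a b ↔ G'.Adj (φ v) (φ w0)) :=
    fun a b ha hb hab =>
      SimpleGraph.adj_const ((memC' a).mp ha) ((memC' b).mp hb) ((memC' (φ v)).mp hφvC')
        ((memC' (φ w0)).mp hφw0) hab hφvw0
  -- the invariant implies being a partial isomorphism
  have hiso : ∀ f : Fin s → Option (V × V'),
      (∀ i, ∀ p ∈ f i, (p.1 ∉ C ∧ p.2 = φ p.1) ∨ (p.1 ∈ C ∧ p.2 ∈ C')) →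
      (∀ i j, ∀ p ∈ f i, ∀ q ∈ f j, (p.1 = q.1 ↔ p.2 = q.2)) →
      EhrPartialIso G G' f := by
    intro f h1 h2 i j p hp q hq
    refine ⟨h2 i j p hp q hq, ?_⟩
    rcases h1 i p hp with ⟨hp1, hp2⟩ | ⟨hp1, hp2⟩ <;>
      rcases h1 j q hq with ⟨hq1, hq2⟩ | ⟨hq1, hq2⟩
    · rw [hp2, hq2, hφ]
    · -- p outside, q inside
      have hnot : φ p.1 ∉ C' := fun h => hp1 ((hφmem p.1).mp h)
      rw [hp2, G.adj_comm p.1 q.1, G'.adj_comm (φ p.1) q.2,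
        hcross q.1 p.1 hq1 hp1, hcross' q.2 (φ p.1) hq2 hnot]
      exact (hφ v p.1).symm
    · -- p inside, q outside
      have hnot : φ q.1 ∉ C' := fun h => hq1 ((hφmem q.1).mp h)
      rw [hq2, hcross p.1 q.1 hp1 hq1, hcross' p.2 (φ q.1) hp2 hnot]
      exact (hφ v q.1).symm
    · rcases eq_or_ne p.1 q.1 with he | hne
      · have he2 : p.2 = q.2 := (h2 i j p hp q hq).mp he
        rw [he, he2]
        exact iff_of_false (G.loopless.irrefl q.1) (G'.loopless.irrefl q.2)
      · have hne2 : p.2 ≠ q.2 := fun h => hne ((h2 i j p hp q hq).mpr h)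
        rw [hbase p.1 q.1 hp1 hq1 hne, hbase' p.2 q.2 hp2 hq2 hne2]
        exact (hφ v w0).symm
  -- updating a configuration preserves the invariant
  have hupd : ∀ f : Fin s → Option (V × V'),
      (∀ i, ∀ p ∈ f i, (p.1 ∉ C ∧ p.2 = φ p.1) ∨ (p.1 ∈ C ∧ p.2 ∈ C')) →
      (∀ i j, ∀ p ∈ f i, ∀ q ∈ f j, (p.1 = q.1 ↔ p.2 = q.2)) →
      ∀ (i : Fin s) (u : V) (u' : V'),
      ((u ∉ C ∧ u' = φ u) ∨ (u ∈ C ∧ u' ∈ C')) →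
      (∀ k, k ≠ i → ∀ q ∈ f k, (u = q.1 ↔ u' = q.2)) →
      (∀ j, ∀ p ∈ Function.update f i (some (u, u')) j,
        (p.1 ∉ C ∧ p.2 = φ p.1) ∨ (p.1 ∈ C ∧ p.2 ∈ C')) ∧
      (∀ j j', ∀ p ∈ Function.update f i (some (u, u')) j,
        ∀ q ∈ Function.update f i (some (u, u')) j', (p.1 = q.1 ↔ p.2 = q.2)) := by
    intro f h1 h2 i u u' hval hmatch
    constructor
    · intro k p hp
      rcases eq_or_ne k i with hk | hk
      · rw [hk, Function.update_self] at hp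
        simp only [Option.mem_def, Option.some_inj] at hp
        subst hp
        exact hval
      · rw [Function.update_of_ne hk] at hp
        exact h1 k p hp
    · intro k k' p hp q hq
      rcases eq_or_ne k i with hk | hk <;> rcases eq_or_ne k' i with hk' | hk'
      · rw [hk, Function.update_self] at hp
        rw [hk', Function.update_self] at hq
        simp only [Option.mem_def, Option.some_inj] at hp hq
        subst hp; subst hq; simp
      · rw [hk, Function.update_self] at hp
        rw [Function.update_of_ne hk'] at hq
        simp only [Option.mem_def, Option.some_inj] at hp
        subst hp
        exact hmatch k' hk' q hq
      · rw [Function.update_of_ne hk] at hp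
        rw [hk', Function.update_self] at hq
        simp only [Option.mem_def, Option.some_inj] at hq
        subst hq
        have h := hmatch k hk p hp
        exact ⟨fun h' => (h.mp h'.symm).symm, fun h' => (h.mpr h'.symm).symm⟩
      · rw [Function.update_of_ne hk] at hp
        rw [Function.update_of_ne hk'] at hq
        exact h2 k k' p hp q hq
  -- cardinality facts
  have hC'big : s ≤ C'.ncard := by
    have hsub : φ '' C ⊆ C' := by rw [hclass]; exact Set.subset_union_left
    have himg : (φ '' C).ncard = s := by
      rw [Set.ncard_image_of_injective _ φ.injective, hs]
    calc s = (φ '' C).ncard := himg.symm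
      _ ≤ C'.ncard := Set.ncard_le_ncard hsub (Set.toFinite _)
  -- main induction
  have main : ∀ (r : ℕ) (f : Fin s → Option (V × V')),
      (∀ i, ∀ p ∈ f i, (p.1 ∉ C ∧ p.2 = φ p.1) ∨ (p.1 ∈ C ∧ p.2 ∈ C')) →
      (∀ i j, ∀ p ∈ f i, ∀ q ∈ f j, (p.1 = q.1 ↔ p.2 = q.2)) →
      DuplicatorWins G G' s r f := by
    intro r
    induction r with
    | zero => intro f h1 h2; exact hiso f h1 h2
    | succ r ih =>
      intro f h1 h2
      refine ⟨hiso f h1 h2, fun i => ⟨?_, ?_⟩⟩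
      · -- Spoiler plays u in G
        intro u
        by_cases hu : u ∈ C
        · by_cases hocc : ∃ k, k ≠ i ∧ ∃ p ∈ f k, p.1 = u
          · obtain ⟨k, hk, p, hp, hpu⟩ := hocc
            subst hpu
            have hp2C' : p.2 ∈ C' := by
              rcases h1 k p hp with ⟨h, _⟩ | ⟨_, h⟩
              · exact absurd hu h
              · exact h
            refine ⟨p.2, ?_⟩
            obtain ⟨g1, g2⟩ := hupd f h1 h2 i p.1 p.2 (Or.inr ⟨hu, hp2C'⟩)
              (fun k' hk' q hq => h2 k k' p hp q hq)
            exact ih _ g1 g2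
          · push_neg at hocc
            obtain ⟨u', hu'C, hu'fresh⟩ :=
              exists_fresh C' (Set.toFinite C') hC'big f Prod.snd i
            have hm : ∀ k, k ≠ i → ∀ q ∈ f k, (u = q.1 ↔ u' = q.2) := by
              intro k hk q hq
              exact iff_of_false (fun h => hocc k hk q hq h.symm) (hu'fresh k hk q hq)
            obtain ⟨g1, g2⟩ := hupd f h1 h2 i u u' (Or.inr ⟨hu, hu'C⟩) hm
            exact ⟨u', ih _ g1 g2⟩
        · have hm : ∀ k, k ≠ i → ∀ q ∈ f k, (u = q.1 ↔ φ u = q.2) := by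
            intro k hk q hq
            rcases h1 k q hq with ⟨hq1, hq2⟩ | ⟨hq1, hq2⟩
            · rw [hq2]
              exact ⟨fun h => congrArg φ h, fun h => φ.injective h⟩
            · refine iff_of_false (fun h => hu (by rw [h]; exact hq1))
                (fun h => hu ((hφmem u).mp (by rw [h]; exact hq2)))
          obtain ⟨g1, g2⟩ := hupd f h1 h2 i u (φ u) (Or.inl ⟨hu, rfl⟩) hm
          exact ⟨φ u, ih _ g1 g2⟩
      · -- Spoiler plays u' in G'
        intro u'
        by_cases hu' : u' ∈ C'
        · by_cases hocc : ∃ k, k ≠ i ∧ ∃ p ∈ f k, p.2 = u'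
          · obtain ⟨k, hk, p, hp, hpu⟩ := hocc
            subst hpu
            have hp1C : p.1 ∈ C := by
              rcases h1 k p hp with ⟨h, he⟩ | ⟨h, _⟩
              · exact absurd ((hφmem p.1).mp (he ▸ hu')) h
              · exact h
            refine ⟨p.1, ?_⟩
            obtain ⟨g1, g2⟩ := hupd f h1 h2 i p.1 p.2 (Or.inr ⟨hp1C, hu'⟩)
              (fun k' hk' q hq => h2 k k' p hp q hq)
            exact ih _ g1 g2
          · push_neg at hocc
            obtain ⟨u, huC, hufresh⟩ :=
              exists_fresh C (Set.toFinite C) hs.symm.le f Prod.fst i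
            have hm : ∀ k, k ≠ i → ∀ q ∈ f k, (u = q.1 ↔ u' = q.2) := by
              intro k hk q hq
              exact iff_of_false (hufresh k hk q hq) (fun h => hocc k hk q hq h.symm)
            obtain ⟨g1, g2⟩ := hupd f h1 h2 i u u' (Or.inr ⟨huC, hu'⟩) hm
            exact ⟨u, ih _ g1 g2⟩
        · have hrange : u' ∈ Set.range φ := by
            by_contra h
            exact hu' (hout u' h)
          obtain ⟨u, rfl⟩ := hrange
          have hu : u ∉ C := fun h => hu' ((hφmem u).mpr h)
          have hm : ∀ k, k ≠ i → ∀ q ∈ f k, (u = q.1 ↔ φ u = q.2) := by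
            intro k hk q hq
            rcases h1 k q hq with ⟨hq1, hq2⟩ | ⟨hq1, hq2⟩
            · rw [hq2]
              exact ⟨fun h => congrArg φ h, fun h => φ.injective h⟩
            · refine iff_of_false (fun h => hu (by rw [h]; exact hq1))
                (fun h => hu ((hφmem u).mp (by rw [h]; exact hq2)))
          obtain ⟨g1, g2⟩ := hupd f h1 h2 i u (φ u) (Or.inl ⟨hu, rfl⟩) hm
          exact ⟨u, ih _ g1 g2⟩
  intro r
  apply main r
  · intro i p hp; simp at hp
  · intro i j p hp q hq; simp at hp
end
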